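/- arXiv:2306.01662 — 6 statements merged into one kernel-verified Lean document; each statement's English description precedes it below -/
import Mathlib

section
/- Let A be an inhabited set with a complete ordered family of equivalences (COFE), and let f : A → A be contractive on fixed points. Then f has a unique fixed point, and this fixed point is the limit of the coherent sequence of iterates n ↦ fⁿ(x) starting from an arbitrary point x ∈ A. -/
/-- A fixed point theorem for COFEs: if `f` is contractive on fixed points on an
inhabited COFE, then `f` has a unique fixed point, which is the limit of the
iterates `f^[n] x` starting from an arbitrary point `x`. -/
theorem cofe_fixed_point_of_contractive_on_fixed_points
    {A : Type*} [Inhabited A] (E : ℕ → A → A → Prop)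
    (hequiv : ∀ n, Equivalence (E n))
    (htotal : ∀ a b, E 0 a b)
    (hmono : ∀ n a b, E (n + 1) a b → E n a b)
    (hsep : ∀ a b, (∀ n, E n a b) → a = b)
    (hcomplete : ∀ x : ℕ → A, (∀ n, E n (x n) (x (n + 1))) → ∃ a, ∀ n, E n (x n) a)
    (f : A → A)
    (hcfp : ∀ n a b, E n a b → E n a (f a) → E n b (f b) → E (n + 1) (f a) (f b)) :
    ∃ p : A, f p = p ∧ (∀ q : A, f q = q → q = p) ∧
      ∀ x : A, (∀ n, E n (f^[n] x) (f^[n + 1] x)) ∧ (∀ n, E n (f^[n] x) p) := by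
  -- coherence of iterates, strengthened
  have key : ∀ (x : A) (n m : ℕ), E n (f^[n + m] x) (f^[n + m + 1] x) := by
    intro x n
    induction n with
    | zero => intro m; exact htotal _ _
    | succ n ih =>
      intro m
      have h1 : n + 1 + m = (n + m) + 1 := by omega
      rw [h1, Function.iterate_succ_apply', Function.iterate_succ_apply']
      exact hcfp n _ _ (ih m) (by
          have := ih m
          rwa [Function.iterate_succ_apply'] at this) (by
          have h3 := ih (m + 1)
          rw [show n + (m + 1) = n + m + 1 by omega,
            Function.iterate_succ_apply' f (n + m + 1) x] at h3
          exact h3)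
  have coh : ∀ (x : A) (n : ℕ), E n (f^[n] x) (f^[n + 1] x) := by
    intro x n
    simpa using key x n 0
  obtain ⟨p, hp⟩ := hcomplete (fun n => f^[n] (default : A)) (coh default)
  -- p is a fixed point
  have hpfix' : ∀ n, E n p (f p) := by
    intro n
    induction n with
    | zero => exact htotal _ _
    | succ n ih =>
      have h1 : E (n + 1) p (f^[n + 1] (default : A)) :=
        (hequiv (n+1)).symm (hp (n+1))
      have h2 : E (n + 1) (f^[n + 1] (default : A)) (f p) := by
        rw [Function.iterate_succ_apply']
        exact hcfp n _ p (hp n)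
          (by have := coh default n; rwa [Function.iterate_succ_apply'] at this) ih
      exact (hequiv (n+1)).trans h1 h2
  have hpfix : f p = p := (hsep _ _ (fun n => (hequiv n).symm (hpfix' n)))
  refine ⟨p, hpfix, ?_, ?_⟩
  · intro q hq
    apply hsep
    intro n
    induction n with
    | zero => exact htotal _ _
    | succ n ih =>
      have := hcfp n q p ih (by rw [hq]; exact (hequiv n).refl q)
        (by rw [hpfix]; exact (hequiv n).refl p)
      rwa [hq, hpfix] at this
  · intro x
    refine ⟨coh x, ?_⟩
    intro n
    induction n with
    | zero => exact htotal _ _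
    | succ n ih =>
      have := hcfp n (f^[n] x) p ih (by
          have := coh x n; rwa [Function.iterate_succ_apply'] at this)
        (by rw [hpfix]; exact (hequiv n).refl p)
      rw [hpfix] at this
      rwa [Function.iterate_succ_apply']
end

section
/- Let A be an inhabited set with a complete ordered family of equivalences (COFE), and let f : A → A be contractive. Then f has a unique fixed point, and this fixed point is the limit of the coherent sequence of iterates n ↦ fⁿ(x) starting from an arbitrary point x ∈ A. -/
/-- Banach / Di Gianantonio–Miculan fixed point theorem for COFEs: a contractive
function on an inhabited COFE has a unique fixed point, which is the limit of the
iterates `f^[n] x` starting from an arbitrary point `x`. -/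
theorem cofe_fixed_point_of_contractive
    {A : Type*} [Inhabited A] (E : ℕ → A → A → Prop)
    (hequiv : ∀ n, Equivalence (E n))
    (htotal : ∀ a b, E 0 a b)
    (hmono : ∀ n a b, E (n + 1) a b → E n a b)
    (hsep : ∀ a b, (∀ n, E n a b) → a = b)
    (hcomplete : ∀ x : ℕ → A, (∀ n, E n (x n) (x (n + 1))) → ∃ a, ∀ n, E n (x n) a)
    (f : A → A)
    (hcontr : ∀ n a b, E n a b → E (n + 1) (f a) (f b)) :
    ∃ p : A, f p = p ∧ (∀ q : A, f q = q → q = p) ∧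
      ∀ x : A, (∀ n, E n (f^[n] x) (f^[n + 1] x)) ∧ (∀ n, E n (f^[n] x) p) := by
  -- coherence of the iterate sequence from any starting point
  have hcoh : ∀ (x : A) (n : ℕ), E n (f^[n] x) (f^[n + 1] x) := by
    intro x n
    induction n with
    | zero => exact htotal _ _
    | succ n ih =>
      have := hcontr n _ _ ih
      simpa [Function.iterate_succ_apply'] using this
  obtain ⟨p, hp⟩ := hcomplete (fun n => f^[n] (default : A)) (hcoh default)
  -- p is a fixed point
  have hfix : f p = p := by
    refine hsep (f p) p fun n => ?_
    · have h1 : E n (f^[n] (default : A)) p := hp n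
      have h2 : E (n + 1) (f^[n + 1] (default : A)) (f p) := by
        have := hcontr n _ _ h1
        simpa [Function.iterate_succ_apply'] using this
      have h3 : E n (f^[n] (default : A)) (f p) :=
        (hequiv n).trans (hcoh default n) (hmono n _ _ h2)
      exact (hequiv n).symm ((hequiv n).trans ((hequiv n).symm h1) h3)
  refine ⟨p, hfix, ?_, ?_⟩
  · intro q hq
    refine hsep q p fun n => ?_
    induction n with
    | zero => exact htotal _ _
    | succ n ih =>
      have := hcontr n _ _ ih
      rwa [hq, hfix] at this
  · intro x
    refine ⟨hcoh x, fun n => ?_⟩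
    induction n with
    | zero => exact htotal _ _
    | succ n ih =>
      have := hcontr n _ _ ih
      rw [hfix] at this
      simpa [Function.iterate_succ_apply'] using this
end

section
/- Let A be a set with an ordered family of equivalences (OFE), and let f : A → A be contractive on fixed points. Then for every x ∈ A, the sequence of iterates n ↦ fⁿ(x) is coherent. -/
/-- On an OFE, if `f` is contractive on fixed points then the sequence of iterates
`n ↦ f^[n] x` is coherent, for every `x`. -/
theorem iterates_coherent
    {A : Type*} (E : ℕ → A → A → Prop)
    (hequiv : ∀ n, Equivalence (E n))
    (htotal : ∀ a b, E 0 a b)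
    (hmono : ∀ n a b, E (n + 1) a b → E n a b)
    (hsep : ∀ a b, (∀ n, E n a b) → a = b)
    (f : A → A)
    (hcfp : ∀ n a b, E n a b → E n a (f a) → E n b (f b) → E (n + 1) (f a) (f b)) :
    ∀ x : A, ∀ n : ℕ, E n (f^[n] x) (f^[n + 1] x) := by
  intro x n
  suffices h : ∀ n k, n ≤ k → E n (f^[k] x) (f^[k + 1] x) from h n n le_rfl
  intro n
  induction n with
  | zero => intro k _; exact htotal _ _
  | succ n ih =>
    intro k hk
    obtain ⟨m, rfl⟩ : ∃ m, k = m + 1 := ⟨k - 1, (Nat.succ_pred_eq_of_pos (by omega)).symm⟩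
    have hm : n ≤ m := by omega
    have h1 := ih m hm
    have h2 := ih (m + 1) (by omega)
    simp only [Function.iterate_succ_apply'] at *
    exact hcfp n _ _ h1 h1 h2
end

section
/- Let A be a set with an ordered family of equivalences (OFE), let f : A → A be contractive on fixed points, let x ∈ A, and let a ∈ A be a limit of the sequence of iterates n ↦ fⁿ(x) (so fⁿ(x) ≡ₙ a for all n). Then f(a) = a. -/
/-- On an OFE, if `f` is contractive on fixed points and `a` is a limit of the
iterates `n ↦ f^[n] x`, then `a` is a fixed point of `f`. -/
theorem limit_of_iterates_is_fixed
    {A : Type*} (E : ℕ → A → A → Prop)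
    (hequiv : ∀ n, Equivalence (E n))
    (htotal : ∀ a b, E 0 a b)
    (hmono : ∀ n a b, E (n + 1) a b → E n a b)
    (hsep : ∀ a b, (∀ n, E n a b) → a = b)
    (f : A → A)
    (hcfp : ∀ n a b, E n a b → E n a (f a) → E n b (f b) → E (n + 1) (f a) (f b))
    (x a : A) (hlim : ∀ n, E n (f^[n] x) a) :
    f a = a := by
  have hQ : ∀ n, E n (f^[n] x) (f^[n+1] x) := fun n =>
    (hequiv n).trans (hlim n) ((hequiv n).symm (hmono n _ _ (hlim (n+1))))
  have hR : ∀ n, E n (f a) a := by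
    intro n
    induction n with
    | zero => exact htotal _ _
    | succ n ih =>
      have hq : E n (f^[n] x) (f (f^[n] x)) := by
        rw [← Function.iterate_succ_apply' f n x]; exact hQ n
      have h1 : E (n+1) (f (f^[n] x)) (f a) :=
        hcfp n (f^[n] x) a (hlim n) hq ((hequiv n).symm ih)
      have h2 : E (n+1) (f^[n+1] x) a := hlim (n+1)
      have : f (f^[n] x) = f^[n+1] x := (Function.iterate_succ_apply' f n x).symm
      rw [this] at h1
      exact (hequiv (n+1)).trans ((hequiv (n+1)).symm h1) h2
  exact hsep _ _ hR
end

section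
/- Let A be a set with an ordered family of equivalences (OFE) and let xₙ be a Cauchy sequence in A. Then there exists a strictly monotone function φ : ℕ → ℕ such that the subsequence n ↦ x_{φ(n)} is coherent, and moreover any limit a of this coherent subsequence is a point to which the original sequence xₙ converges. -/
/-- On an OFE, every Cauchy sequence has a coherent subsequence, and the original
sequence converges to any limit of that subsequence. -/
theorem cauchy_has_coherent_subsequence
    {A : Type*} (E : ℕ → A → A → Prop)
    (hequiv : ∀ n, Equivalence (E n))
    (htotal : ∀ a b, E 0 a b)
    (hmono : ∀ n a b, E (n + 1) a b → E n a b)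
    (hsep : ∀ a b, (∀ n, E n a b) → a = b)
    (x : ℕ → A)
    (hcauchy : ∀ n : ℕ, ∃ k : ℕ, ∀ i ≥ k, ∀ j ≥ k, E n (x i) (x j)) :
    ∃ φ : ℕ → ℕ, StrictMono φ ∧
      (∀ n, E n (x (φ n)) (x (φ (n + 1)))) ∧
      ∀ a : A, (∀ n, E n (x (φ n)) a) →
        ∀ n : ℕ, ∃ k : ℕ, ∀ i ≥ k, E n (x i) a := by
  choose K hK using hcauchy
  set φ : ℕ → ℕ := fun n => Nat.rec (K 0) (fun n p => max (p + 1) (K (n + 1))) n with hφ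
  have hstep : ∀ n, φ (n + 1) = max (φ n + 1) (K (n + 1)) := fun n => rfl
  have hge : ∀ n, φ n ≥ K n := by
    intro n
    cases n with
    | zero => exact le_refl _
    | succ m => rw [hstep]; exact le_max_right _ _
  have hlt : ∀ n, φ n < φ (n + 1) := by
    intro n; rw [hstep]; exact lt_of_lt_of_le (Nat.lt_succ_self _) (le_max_left _ _)
  refine ⟨φ, strictMono_nat_of_lt_succ hlt, ?_, ?_⟩
  · intro n
    exact hK n _ (hge n) _ (le_trans (hge n) (le_of_lt (hlt n)))
  · intro a ha n
    refine ⟨φ n, fun i hi => ?_⟩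
    exact (hequiv n).trans (hK n i (le_trans (hge n) hi) (φ n) (hge n)) (ha n)
end

section
/- Let T : (ℕ → ℕ) → (ℕ → ℕ) be defined by T(f)(x) = 0 if x = 0, and T(f)(x) = f(f(x - 1)) otherwise, and equip ℕ → ℕ with the relations f ≡ₙ g iff ∀ k < n, f(k) = g(k). Then T is contractive on fixed points: whenever f ≡ₙ g, f ≡ₙ T(f), and g ≡ₙ T(g), it follows that T(f) ≡ₙ₊₁ T(g). -/
/-- The operator `T f x = if x = 0 then 0 else f (f (x - 1))`. -/
def T (f : ℕ → ℕ) : ℕ → ℕ := fun x => if x = 0 then 0 else f (f (x - 1))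

lemma fix_le (n : ℕ) (f : ℕ → ℕ) (hf : ∀ k < n, f k = T f k) :
    ∀ k < n, f k ≤ k := by
  intro k
  induction k using Nat.strong_induction_on with
  | _ k ih =>
    intro hk
    rcases Nat.eq_zero_or_pos k with h0 | hpos
    · subst h0
      simp [hf 0 hk, T]
    · have hk1 : k - 1 < k := Nat.sub_lt hpos one_pos
      have h1 : f (k - 1) ≤ k - 1 := ih _ hk1 (lt_trans hk1 hk)
      have h2 : f (f (k - 1)) ≤ f (k - 1) :=
        ih _ (lt_of_le_of_lt h1 hk1) (lt_trans (lt_of_le_of_lt h1 hk1) hk)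
      have : f k = f (f (k - 1)) := by
        rw [hf k hk]; simp [T]; omega
      omega

/-- `T` is contractive on fixed points with respect to the relations
`f ≡ₙ g ↔ ∀ k < n, f k = g k`. -/
theorem T_contractive_on_fixed_points
    (n : ℕ) (f g : ℕ → ℕ)
    (hfg : ∀ k < n, f k = g k)
    (hf : ∀ k < n, f k = T f k)
    (hg : ∀ k < n, g k = T g k) :
    ∀ k < n + 1, T f k = T g k := by
  intro k hk
  rcases Nat.eq_zero_or_pos k with h0 | hpos
  · simp [h0, T]
  · have hne : k ≠ 0 := by omega
    simp only [T, if_neg hne]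
    have hk1 : k - 1 < n := by omega
    have h1 : f (k - 1) = g (k - 1) := hfg _ hk1
    have h2 : f (k - 1) ≤ k - 1 := fix_le n f hf _ hk1
    rw [h1.symm, hfg _ (lt_of_le_of_lt h2 hk1)]
end
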